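/- arXiv:2509.07198 — 3 statements merged into one kernel-verified Lean document; each statement's English description precedes it below -/
import Mathlib

section
/- Let X be a nonempty set, let M ≥ 0, let γ ∈ (0,1), let w ≥ 1 be an integer, and set W = Σ_{j=0}^{w−1} γ^j. Let (f_s)_{s ∈ ℤ} be a family of functions f_s : X → ℝ satisfying |f_s(x)| ≤ M for all s ∈ ℤ and x ∈ X, and let (θ_s)_{s ∈ ℤ} be a sequence of points of X. Then for every t ∈ ℤ, (1/W) · Σ_{j=0}^{w−1} γ^j · ( f_{t+1−j}(θ_{t+1−j}) − f_{t−j}(θ_{t+1−j}) ) ≤ M(1+γ^{w−1})/W + M(1−γ^{w−1})(1+γ)/(W(1−γ)). -/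
/-!
Both sides collapse: since `W (1 - γ) = 1 - γ ^ w`, the right-hand side is exactly `2 M`, while each
summand `f_{t+1-j}(θ) - f_{t-j}(θ)` is at most `2 M`, so the left-hand side is a `γ ^ j`-weighted
average of numbers at most `2 M`.
-/

open Finset

lemma sum_mul_sub_le_two_mul_sum {ι : Type*} (s : Finset ι) {c a b : ι → ℝ} {M : ℝ}
    (hc : ∀ i ∈ s, 0 ≤ c i) (ha : ∀ i ∈ s, |a i| ≤ M) (hb : ∀ i ∈ s, |b i| ≤ M) :
    ∑ i ∈ s, c i * (a i - b i) ≤ 2 * M * ∑ i ∈ s, c i := by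
  rw [mul_sum]
  refine sum_le_sum fun i hi => ?_
  have hab : a i - b i ≤ 2 * M := by
    linarith [(abs_le.mp (ha i hi)).2, (abs_le.mp (hb i hi)).1]
  nlinarith [hc i hi]

lemma geom_sum_drift_bound_eq (M γ : ℝ) (n : ℕ) (hγ : γ ≠ 1)
    (hW : ∑ i ∈ range (n + 1), γ ^ i ≠ 0) :
    M * (1 + γ ^ n) / ∑ i ∈ range (n + 1), γ ^ i
        + M * (1 - γ ^ n) * (1 + γ) / ((∑ i ∈ range (n + 1), γ ^ i) * (1 - γ))
      = 2 * M := by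
  have hgeom := geom_sum_mul γ (n + 1)
  have h1γ : 1 - γ ≠ 0 := sub_ne_zero.mpr hγ.symm
  field_simp
  linear_combination (2 * M) * hgeom

theorem smoothed_regret_forward_drift_bound_general
    {X : Type*} (M : ℝ)
    (γ : ℝ) (hγ : γ ∈ Set.Ioo (0 : ℝ) 1) (w : ℕ) (hw : 1 ≤ w)
    (W : ℝ) (hW : W = ∑ j ∈ Finset.range w, γ ^ j)
    (f : ℤ → X → ℝ) (hf : ∀ (s : ℤ) (x : X), |f s x| ≤ M)
    (θ : ℤ → X) (t : ℤ) :
    (1 / W) * ∑ j ∈ Finset.range w,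
        γ ^ j * (f (t + 1 - j) (θ (t + 1 - j)) - f (t - j) (θ (t + 1 - j)))
      ≤ M * (1 + γ ^ (w - 1)) / W
        + M * (1 - γ ^ (w - 1)) * (1 + γ) / (W * (1 - γ)) := by
  obtain ⟨hγ0, hγ1⟩ := hγ
  obtain ⟨n, rfl⟩ := Nat.exists_eq_add_of_le' hw
  have hWpos : 0 < W := hW ▸ geom_sum_pos hγ0.le n.succ_ne_zero
  rw [Nat.add_sub_cancel, hW, geom_sum_drift_bound_eq M γ n hγ1.ne (hW ▸ hWpos.ne'), ← hW]
  calc (1 / W) * ∑ j ∈ range (n + 1),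
        γ ^ j * (f (t + 1 - j) (θ (t + 1 - j)) - f (t - j) (θ (t + 1 - j)))
      ≤ (1 / W) * (2 * M * W) := by
        gcongr
        rw [hW]
        exact sum_mul_sub_le_two_mul_sum _ (fun j _ => by positivity)
          (fun j _ => hf _ _) (fun j _ => hf _ _)
    _ = 2 * M := by field_simp

/-- Lemma 2: drift bound on the difference of smoothed regrets. -/
theorem smoothed_regret_forward_drift_bound
    {X : Type*} [Nonempty X] (M : ℝ) (hM : 0 ≤ M)
    (γ : ℝ) (hγ : γ ∈ Set.Ioo (0 : ℝ) 1) (w : ℕ) (hw : 1 ≤ w)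
    (W : ℝ) (hW : W = ∑ j ∈ Finset.range w, γ ^ j)
    (f : ℤ → X → ℝ) (hf : ∀ (s : ℤ) (x : X), |f s x| ≤ M)
    (θ : ℤ → X) (t : ℤ) :
    (1 / W) * ∑ j ∈ Finset.range w,
        γ ^ j * (f (t + 1 - j) (θ (t + 1 - j)) - f (t - j) (θ (t + 1 - j)))
      ≤ M * (1 + γ ^ (w - 1)) / W
        + M * (1 - γ ^ (w - 1)) * (1 + γ) / (W * (1 - γ)) :=
  smoothed_regret_forward_drift_bound_general M γ hγ w hw W hW f hf θ t
end

section
/- Let x_1, …, x_n ∈ ℝ^d (n ≥ 1), let θ be a real r × d matrix, and on a probability space let ξ, ξ' : Ω → ℝ^r be square-integrable random vectors with E[ξ] = 0, E[ξ'] = 0 and E[⟨ξ, ξ'⟩] = 0 (for instance, ξ and ξ' independent and zero-mean). Define f(θ) = −(1/n) Σ_{i=1}^n E[ ⟨θ x_i + ξ, θ x_i + ξ'⟩ ] + (1/2)‖θᵀθ‖_F², and let X̄ = (1/n) Σ_{i=1}^n x_i x_iᵀ be the empirical covariance matrix. Then f(θ) = (1/2)‖X̄ − θᵀθ‖_F²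 − (1/2)‖X̄‖_F². Consequently, a matrix θ* minimizes f over any set of r × d matrices if and only if θ* minimizes θ ↦ ‖X̄ − θᵀθ‖_F² over that set. -/
/-!
With `u = θ xᵢ`, expanding the product, the noise contributes
`u ⬝ᵥ E[ξ'] + E[ξ] ⬝ᵥ u + E[ξ ⬝ᵥ ξ'] = 0`, so the data term of the loss is
`(1/n) ∑ ‖θ xᵢ‖² = ∑ₐ,ᵦ X̄ₐᵦ (θᵀθ)ₐᵦ`, the Frobenius inner product `⟨X̄, θᵀθ⟩`. Completing the
square `‖X̄ - θᵀθ‖² = ‖X̄‖² - 2⟨X̄, θᵀθ⟩ + ‖θᵀθ‖²` gives the identity, so the loss is an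
increasing affine function of `‖X̄ - θᵀθ‖²` and has the same minimizers.
-/

open MeasureTheory Matrix

namespace MeasureTheory

variable {Ω ι : Type*} [Fintype ι] [MeasurableSpace Ω] {μ : Measure Ω}

lemma Integrable.const_dotProduct (u : ι → ℝ) {g : Ω → ι → ℝ} (hg : Integrable g μ) :
    Integrable (fun ω => u ⬝ᵥ g ω) μ :=
  integrable_finsetSum _ fun i _ => (hg.eval i).const_mul _

lemma integral_const_dotProduct (u : ι → ℝ) {g : Ω → ι → ℝ} (hg : Integrable g μ) :
    ∫ ω, u ⬝ᵥ g ω ∂μ = u ⬝ᵥ ∫ ω, g ω ∂μ := by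
  simp only [dotProduct]
  rw [integral_finsetSum _ fun i _ => (hg.eval i).const_mul _]
  simp only [integral_const_mul, eval_integral hg.eval]

lemma MemLp.integrable_dotProduct {g h : Ω → ι → ℝ} (hg : MemLp g 2 μ) (hh : MemLp h 2 μ) :
    Integrable (fun ω => g ω ⬝ᵥ h ω) μ :=
  integrable_finsetSum _ fun i _ => (hg.eval i).integrable_mul (hh.eval i)

lemma integral_add_dotProduct_add_of_centered [IsProbabilityMeasure μ] {ξ ξ' : Ω → ι → ℝ}
    (hξ : MemLp ξ 2 μ) (hξ' : MemLp ξ' 2 μ) (hξmean : ∫ ω, ξ ω ∂μ = 0)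
    (hξ'mean : ∫ ω, ξ' ω ∂μ = 0) (horth : ∫ ω, ξ ω ⬝ᵥ ξ' ω ∂μ = 0) (u : ι → ℝ) :
    ∫ ω, (u + ξ ω) ⬝ᵥ (u + ξ' ω) ∂μ = u ⬝ᵥ u := by
  have hξint := hξ.integrable one_le_two
  have hξ'int := hξ'.integrable one_le_two
  have hexpand : ∀ ω, (u + ξ ω) ⬝ᵥ (u + ξ' ω)
      = u ⬝ᵥ u + u ⬝ᵥ ξ' ω + u ⬝ᵥ ξ ω + ξ ω ⬝ᵥ ξ' ω := fun ω => by
    simp only [add_dotProduct, dotProduct_add, dotProduct_comm (ξ ω) u]; ring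
  simp_rw [hexpand]
  rw [integral_add, integral_add, integral_add, integral_const, integral_const_dotProduct _ hξ'int,
    integral_const_dotProduct _ hξint, hξmean, hξ'mean, horth]
  · simp
  · exact integrable_const _
  · exact hξ'int.const_dotProduct u
  · exact (integrable_const _).add (hξ'int.const_dotProduct u)
  · exact hξint.const_dotProduct u
  · exact ((integrable_const _).add (hξ'int.const_dotProduct u)).add (hξint.const_dotProduct u)
  · exact hξ.integrable_dotProduct hξ'

end MeasureTheory

namespace Matrix

variable {R m k : Type*} [Fintype m] [Fintype k]

lemma mulVec_dotProduct_mulVec_self [CommSemiring R] (θ : Matrix m k R) (u : k → R) :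
    θ *ᵥ u ⬝ᵥ θ *ᵥ u = ∑ a, ∑ b, vecMulVec u u a b * (θᵀ * θ) a b := by
  simp only [dotProduct, mulVec, vecMulVec_apply, mul_apply, transpose_apply, Finset.sum_mul,
    Finset.mul_sum]
  rw [Finset.sum_comm_cycle (f := fun a b j => u a * u b * (θ j a * θ j b))]
  exact Finset.sum_congr rfl fun j _ => Finset.sum_congr rfl fun a _ =>
    Finset.sum_congr rfl fun b _ => by ring

lemma sum_sum_smul_sum_apply_mul [CommSemiring R] {ι : Type*} [Fintype ι] (c : R)
    (A : ι → Matrix m k R) (M : Matrix m k R) :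
    ∑ a, ∑ b, (c • ∑ i, A i) a b * M a b = c * ∑ i, ∑ a, ∑ b, A i a b * M a b := by
  simp only [smul_apply, sum_apply, smul_eq_mul, Finset.mul_sum, Finset.sum_mul, mul_assoc]
  exact Finset.sum_comm_cycle

lemma sum_sum_sub_apply_sq [CommRing R] (A B : Matrix m k R) :
    ∑ a, ∑ b, (A - B) a b ^ 2
      = ∑ a, ∑ b, A a b ^ 2 - 2 * ∑ a, ∑ b, A a b * B a b + ∑ a, ∑ b, B a b ^ 2 := by
  simp only [sub_apply, sub_sq, Finset.sum_add_distrib, Finset.sum_sub_distrib, Finset.mul_sum,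
    mul_assoc]

end Matrix

theorem ssl_loss_equivalent_to_matrix_factorization_general
    (n d r : ℕ)
    {Ω : Type*} [MeasurableSpace Ω] (μ : Measure Ω) [IsProbabilityMeasure μ]
    (x : Fin n → Fin d → ℝ)
    (ξ ξ' : Ω → Fin r → ℝ)
    (hξ2 : MemLp ξ 2 μ) (hξ'2 : MemLp ξ' 2 μ)
    (hξmean : ∫ ω, ξ ω ∂μ = 0) (hξ'mean : ∫ ω, ξ' ω ∂μ = 0)
    (horth : ∫ ω, ∑ j, ξ ω j * ξ' ω j ∂μ = 0)
    (f : Matrix (Fin r) (Fin d) ℝ → ℝ)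
    (hf : ∀ θ : Matrix (Fin r) (Fin d) ℝ,
      f θ = -((1 / (n : ℝ)) * ∑ i, ∫ ω,
            ∑ j, (θ.mulVec (x i) j + ξ ω j) * (θ.mulVec (x i) j + ξ' ω j) ∂μ)
        + (1 / 2) * ∑ a, ∑ b, ((θ.transpose * θ) a b) ^ 2)
    (Xbar : Matrix (Fin d) (Fin d) ℝ)
    (hXbar : Xbar = (1 / (n : ℝ)) • ∑ i, Matrix.vecMulVec (x i) (x i)) :
    (∀ θ : Matrix (Fin r) (Fin d) ℝ,
        f θ = (1 / 2) * ∑ a, ∑ b, ((Xbar - θ.transpose * θ) a b) ^ 2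
          - (1 / 2) * ∑ a, ∑ b, (Xbar a b) ^ 2)
    ∧ ∀ (S : Set (Matrix (Fin r) (Fin d) ℝ)) (θstar : Matrix (Fin r) (Fin d) ℝ),
        θstar ∈ S →
        ((∀ θ ∈ S, f θstar ≤ f θ) ↔
          (∀ θ ∈ S, ∑ a, ∑ b, ((Xbar - θstar.transpose * θstar) a b) ^ 2
            ≤ ∑ a, ∑ b, ((Xbar - θ.transpose * θ) a b) ^ 2)) := by
  have hloss : ∀ θ : Matrix (Fin r) (Fin d) ℝ,
      f θ = (1 / 2) * ∑ a, ∑ b, ((Xbar - θᵀ * θ) a b) ^ 2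
        - (1 / 2) * ∑ a, ∑ b, (Xbar a b) ^ 2 := by
    intro θ
    have hnoise : ∀ i, ∫ ω, ∑ j, ((θ *ᵥ x i) j + ξ ω j) * ((θ *ᵥ x i) j + ξ' ω j) ∂μ
        = θ *ᵥ x i ⬝ᵥ θ *ᵥ x i := fun i =>
      integral_add_dotProduct_add_of_centered hξ2 hξ'2 hξmean hξ'mean horth _
    rw [hf θ, Finset.sum_congr rfl fun i _ => hnoise i, sum_sum_sub_apply_sq]
    simp only [mulVec_dotProduct_mulVec_self]
    rw [← sum_sum_smul_sum_apply_mul, ← hXbar]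
    ring
  refine ⟨hloss, fun S θstar _ => ?_⟩
  simp only [hloss]
  constructor <;> intro h θ hθ <;> linarith [h θ hθ]

/-- The simplified self-supervised loss equals the matrix-factorization objective
(1/2)‖X̄ − θᵀθ‖_F² up to the constant −(1/2)‖X̄‖_F²; consequently minimizing it is
equivalent to minimizing θ ↦ ‖X̄ − θᵀθ‖_F². -/
theorem ssl_loss_equivalent_to_matrix_factorization
    (n d r : ℕ) (hn : 1 ≤ n)
    {Ω : Type*} [MeasurableSpace Ω] (μ : Measure Ω) [IsProbabilityMeasure μ]
    (x : Fin n → Fin d → ℝ)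
    (ξ ξ' : Ω → Fin r → ℝ)
    (hξ2 : MemLp ξ 2 μ) (hξ'2 : MemLp ξ' 2 μ)
    (hξmean : ∫ ω, ξ ω ∂μ = 0) (hξ'mean : ∫ ω, ξ' ω ∂μ = 0)
    (horth : ∫ ω, ∑ j, ξ ω j * ξ' ω j ∂μ = 0)
    (f : Matrix (Fin r) (Fin d) ℝ → ℝ)
    (hf : ∀ θ : Matrix (Fin r) (Fin d) ℝ,
      f θ = -((1 / (n : ℝ)) * ∑ i, ∫ ω,
            ∑ j, (θ.mulVec (x i) j + ξ ω j) * (θ.mulVec (x i) j + ξ' ω j) ∂μ)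
        + (1 / 2) * ∑ a, ∑ b, ((θ.transpose * θ) a b) ^ 2)
    (Xbar : Matrix (Fin d) (Fin d) ℝ)
    (hXbar : Xbar = (1 / (n : ℝ)) • ∑ i, Matrix.vecMulVec (x i) (x i)) :
    (∀ θ : Matrix (Fin r) (Fin d) ℝ,
        f θ = (1 / 2) * ∑ a, ∑ b, ((Xbar - θ.transpose * θ) a b) ^ 2
          - (1 / 2) * ∑ a, ∑ b, (Xbar a b) ^ 2)
    ∧ ∀ (S : Set (Matrix (Fin r) (Fin d) ℝ)) (θstar : Matrix (Fin r) (Fin d) ℝ),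
        θstar ∈ S →
        ((∀ θ ∈ S, f θstar ≤ f θ) ↔
          (∀ θ ∈ S, ∑ a, ∑ b, ((Xbar - θstar.transpose * θstar) a b) ^ 2
            ≤ ∑ a, ∑ b, ((Xbar - θ.transpose * θ) a b) ^ 2)) :=
  ssl_loss_equivalent_to_matrix_factorization_general n d r μ x ξ ξ' hξ2 hξ'2 hξmean hξ'mean horth f
    hf Xbar hXbar
end

section
/- Let X be a symmetric positive semidefinite real d × d matrix with largest eigenvalue λ₁(X) ≤ Γ. Then for all U, V ∈ ℝ^{d×r} with ‖U‖_F² ≤ Γ and ‖V‖_F² ≤ Γ, one has ‖2(UUᵀ − X)U − 2(VVᵀ − X)V‖_F ≤ 16Γ·‖U − V‖_F. -/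
open Matrix

attribute [local instance] Matrix.frobeniusNormedAddCommGroup Matrix.frobeniusNormedSpace

/-!
The gradient difference is `2 • ((U Uᵀ U - V Vᵀ V) - X (U - V))`. Telescoping the cubic part
writes it as three products, each with one factor `U - V` and two factors of Frobenius norm at
most `√Γ`, so it is at most `3Γ ‖U - V‖`. For the linear part, `Γ² • 1 - X * X` is positive
semidefinite by the functional calculus, hence `tr (Mᵀ X² M) ≤ Γ² tr (Mᵀ M)`, i.e.
`‖X M‖ ≤ Γ ‖M‖`. This gives `8Γ ‖U - V‖`, well within `16Γ ‖U - V‖`.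
-/

namespace Matrix

variable {l m n o : Type*} [Fintype l] [Fintype m] [Fintype n] [Fintype o]

theorem frobenius_norm_sq_eq_trace (A : Matrix m n ℝ) : ‖A‖ ^ 2 = (Aᵀ * A).trace := by
  rw [frobenius_norm_def, ← Real.rpow_natCast, ← Real.rpow_mul (by positivity), Finset.sum_comm]
  simp [trace, mul_apply, sq]

open scoped MatrixOrder in
theorem IsHermitian.posSemidef_sq_smul_one_sub_mul_self [DecidableEq n] {X : Matrix n n ℝ}
    (hX : X.IsHermitian) {c : ℝ} (hc : ∀ i, |hX.eigenvalues i| ≤ c) :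
    (c ^ 2 • (1 : Matrix n n ℝ) - X * X).PosSemidef := by
  have hX' : IsSelfAdjoint X := hX
  have hcfc : c ^ 2 • (1 : Matrix n n ℝ) - X * X = cfc (fun x : ℝ ↦ c ^ 2 - x ^ 2) X := by
    rw [cfc_sub (fun _ ↦ c ^ 2) (· ^ 2) X, cfc_const (c ^ 2) X, cfc_pow_id X 2,
      Algebra.algebraMap_eq_smul_one, sq X]
  rw [← nonneg_iff_posSemidef, hcfc]
  refine cfc_nonneg fun x hx ↦ ?_
  obtain ⟨i, rfl⟩ := hX.spectrum_real_eq_range_eigenvalues ▸ hx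
  simpa [sq_abs] using pow_le_pow_left₀ (abs_nonneg _) (hc i) 2

theorem IsHermitian.frobenius_norm_mul_le [DecidableEq m] {X : Matrix m m ℝ} (hX : X.IsHermitian)
    {c : ℝ} (hc₀ : 0 ≤ c) (hc : ∀ i, |hX.eigenvalues i| ≤ c) (M : Matrix m n ℝ) :
    ‖X * M‖ ≤ c * ‖M‖ := by
  have hXt : Xᵀ = X := by simpa [IsHermitian] using hX
  have hgap :=
    ((hX.posSemidef_sq_smul_one_sub_mul_self hc).conjTranspose_mul_mul_same M).trace_nonneg
  simp only [conjTranspose_eq_transpose_of_trivial, Matrix.mul_sub, Matrix.sub_mul,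
    Matrix.mul_smul, Matrix.smul_mul, Matrix.mul_one, trace_sub, trace_smul, smul_eq_mul,
    sub_nonneg] at hgap
  have hsq : ‖X * M‖ ^ 2 ≤ (c * ‖M‖) ^ 2 := by
    rw [mul_pow, frobenius_norm_sq_eq_trace, frobenius_norm_sq_eq_trace, transpose_mul, hXt]
    simpa only [Matrix.mul_assoc] using hgap
  exact (pow_le_pow_iff_left₀ (norm_nonneg _) (by positivity) two_ne_zero).mp hsq

theorem frobenius_norm_mul_transpose_mul_le (A : Matrix l m ℝ) (B : Matrix n m ℝ)
    (C : Matrix n o ℝ) : ‖A * Bᵀ * C‖ ≤ ‖A‖ * ‖B‖ * ‖C‖ :=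
  calc ‖A * Bᵀ * C‖ ≤ ‖A * Bᵀ‖ * ‖C‖ := frobenius_norm_mul _ _
    _ ≤ ‖A‖ * ‖B‖ * ‖C‖ := by
      gcongr
      exact (frobenius_norm_mul _ _).trans_eq (by rw [frobenius_norm_transpose])

theorem frobenius_norm_mul_transpose_mul_sub_le (U V : Matrix m n ℝ) :
    ‖U * Uᵀ * U - V * Vᵀ * V‖ ≤ (‖U‖ ^ 2 + ‖U‖ * ‖V‖ + ‖V‖ ^ 2) * ‖U - V‖ := by
  have telescope : U * Uᵀ * U - V * Vᵀ * V
      = (U - V) * Uᵀ * U + V * (U - V)ᵀ * U + V * Vᵀ * (U - V) := by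
    simp only [Matrix.sub_mul, Matrix.mul_sub, transpose_sub]
    abel
  rw [telescope]
  refine (norm_add₃_le ..).trans ?_
  have h₁ := frobenius_norm_mul_transpose_mul_le (U - V) U U
  have h₂ := frobenius_norm_mul_transpose_mul_le V (U - V) U
  have h₃ := frobenius_norm_mul_transpose_mul_le V V (U - V)
  linarith

end Matrix

/-- 16Γ-smoothness of the matrix-factorization objective within the Frobenius
ball ‖U‖² ≤ Γ, when the PSD matrix X has largest eigenvalue at most Γ. -/
theorem matrix_factorization_gradient_lipschitz
    (d r : ℕ) (Γ : ℝ) (X : Matrix (Fin d) (Fin d) ℝ)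
    (hX : X.PosSemidef) (hΓ : ∀ i, hX.1.eigenvalues i ≤ Γ)
    (U V : Matrix (Fin d) (Fin r) ℝ)
    (hU : ‖U‖ ^ 2 ≤ Γ) (hV : ‖V‖ ^ 2 ≤ Γ) :
    ‖2 • ((U * Uᵀ - X) * U) - 2 • ((V * Vᵀ - X) * V)‖ ≤ 16 * Γ * ‖U - V‖ := by
  have hΓ₀ : 0 ≤ Γ := (sq_nonneg _).trans hU
  have hUV : ‖U‖ * ‖V‖ ≤ Γ := by nlinarith [sq_nonneg (‖U‖ - ‖V‖)]
  have hXUV : ‖X * (U - V)‖ ≤ Γ * ‖U - V‖ :=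
    hX.1.frobenius_norm_mul_le hΓ₀
      (fun i ↦ (abs_of_nonneg (hX.eigenvalues_nonneg i)).trans_le (hΓ i)) _
  have hgrad : 2 • ((U * Uᵀ - X) * U) - 2 • ((V * Vᵀ - X) * V)
      = 2 • ((U * Uᵀ * U - V * Vᵀ * V) - X * (U - V)) := by
    simp only [Matrix.sub_mul, Matrix.mul_sub]
    abel
  calc ‖2 • ((U * Uᵀ - X) * U) - 2 • ((V * Vᵀ - X) * V)‖
      = 2 * ‖(U * Uᵀ * U - V * Vᵀ * V) - X * (U - V)‖ := by
        rw [hgrad, ← Nat.cast_smul_eq_nsmul ℝ, norm_smul]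
        norm_num
    _ ≤ 2 * ((Γ + Γ + Γ) * ‖U - V‖ + Γ * ‖U - V‖) := by
      gcongr
      refine (norm_sub_le _ _).trans 
        (add_le_add ((frobenius_norm_mul_transpose_mul_sub_le U V).trans ?_) hXUV)
      gcongr
    _ ≤ 16 * Γ * ‖U - V‖ := by nlinarith [norm_nonneg (U - V)]
end
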